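/- arXiv:2510.08426 — 7 statements merged into one kernel-verified Lean document; each statement's English description precedes it below -/
import Mathlib

section
/- Let G be a finite group, H ≤ G and N ⊴ G. If H satisfies the Π-property in G, then HN/N satisfies the Π-property in G/N. -/
/-- `H` satisfies the Π-property in `G`: for every chief factor `L/K` of `G`,
`|G/K : N_{G/K}(HK/K ∩ L/K)|` is a `π(HK/K ∩ L/K)`-number. -/
def SatisfiesPiProperty {G : Type*} [Group G] (H : Subgroup G) : Prop :=
  ∀ (K L : Subgroup G) (hK : K.Normal) (_ : L.Normal) (_ : K < L)
    (_ : ∀ M : Subgroup G, M.Normal → K ≤ M → M ≤ L → M = K ∨ M = L),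
    haveI := hK
    ∀ q : ℕ, q.Prime →
      q ∣ (Subgroup.normalizer ((H.map (QuotientGroup.mk' K) ⊓ L.map (QuotientGroup.mk' K) : Subgroup (G ⧸ K)) : Set (G ⧸ K))).index →
      q ∣ Nat.card ↥(H.map (QuotientGroup.mk' K) ⊓ L.map (QuotientGroup.mk' K))

/-- `H` satisfies the `IC`-Π-property in `G`: `H ∩ [H,G]` satisfies the Π-property in `G`. -/
def SatisfiesICPiProperty {G : Type*} [Group G] (H : Subgroup G) : Prop :=
  SatisfiesPiProperty (H ⊓ ⁅H, (⊤ : Subgroup G)⁆)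

/-! Every chief factor of `G/N` has the form `(L/N)/(K/N)` for a chief factor `L/K` of `G` with
`N ≤ K`. For such a factor, the third isomorphism theorem `(G/N)/(K/N) ≃ G/K` carries
`(HN/N)(K/N)/(K/N) ∩ (L/N)/(K/N)` onto `HK/K ∩ L/K`, and an isomorphism preserves both the order of
a subgroup and the index of its normalizer. -/

open Subgroup QuotientGroup

def Subgroup.IsChiefFactor {G : Type*} [Group G] (K L : Subgroup G) : Prop :=
  K.Normal ∧ L.Normal ∧ K < L ∧ ∀ M : Subgroup G, M.Normal → K ≤ M → M ≤ L → M = K ∨ M = L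

theorem MulEquiv.index_normalizer_map {G G' : Type*} [Group G] [Group G'] (e : G ≃* G')
    (S : Subgroup G) :
    (normalizer ((S.map (e : G →* G')) : Set G')).index = (normalizer (S : Set G)).index := by
  rw [← index_map_equiv (normalizer (S : Set G)) e]
  exact congrArg index (map_equiv_normalizer_eq S e).symm

namespace QuotientGroup

variable {G : Type*} [Group G] {N : Subgroup G} [N.Normal]

theorem exists_le_map_mk'_eq (K' : Subgroup (G ⧸ N)) :
    ∃ K : Subgroup G, N ≤ K ∧ K.map (mk' N) = K' :=
  ⟨K'.comap (mk' N), le_comap_mk' N K', map_comap_eq_self_of_surjective (mk'_surjective N) K'⟩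

theorem comap_map_mk'_eq_self {K : Subgroup G} (hNK : N ≤ K) :
    (K.map (mk' N)).comap (mk' N) = K :=
  comap_map_eq_self (by rwa [ker_mk'])

theorem map_mk'_map_mk'_eq {K : Subgroup G} [K.Normal] (hNK : N ≤ K) (S : Subgroup G) :
    (S.map (mk' N)).map (mk' (K.map (mk' N))) =
      (S.map (mk' K)).map ((quotientQuotientEquivQuotient N K hNK).symm : G ⧸ K →* _) := by
  rw [eq_comm, map_symm_eq_iff_map_eq, Subgroup.map_map, Subgroup.map_map]
  rfl

theorem map_mk'_inf_map_mk'_eq {K : Subgroup G} [K.Normal] (hNK : N ≤ K) (S T : Subgroup G) :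
    (S.map (mk' N)).map (mk' (K.map (mk' N))) ⊓ (T.map (mk' N)).map (mk' (K.map (mk' N))) =
      (S.map (mk' K) ⊓ T.map (mk' K)).map
        ((quotientQuotientEquivQuotient N K hNK).symm : G ⧸ K →* _) := by
  rw [map_mk'_map_mk'_eq hNK, map_mk'_map_mk'_eq hNK, map_inf _ _ _ (MulEquiv.injective _)]

end QuotientGroup

theorem Subgroup.IsChiefFactor.of_map_mk' {G : Type*} [Group G] {N K L : Subgroup G} [N.Normal]
    (hNK : N ≤ K) (hNL : N ≤ L) (h : IsChiefFactor (K.map (mk' N)) (L.map (mk' N))) :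
    IsChiefFactor K L := by
  obtain ⟨hK, hL, hlt, hmin⟩ := h
  refine ⟨comap_map_mk'_eq_self hNK ▸ hK.comap _, comap_map_mk'_eq_self hNL ▸ hL.comap _, ?_, ?_⟩
  · rw [← comap_map_mk'_eq_self hNK, ← comap_map_mk'_eq_self hNL]
    exact (comap_lt_comap_of_surjective (mk'_surjective N)).2 hlt
  · intro M hM hKM hML
    have hNM : N ≤ M := hNK.trans hKM
    rcases hmin _ (hM.map _ (mk'_surjective N)) (map_mono hKM) (map_mono hML) with hM' | hM'
    · exact .inl (by rw [← comap_map_mk'_eq_self hNM, hM', comap_map_mk'_eq_self hNK])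
    · exact .inr (by rw [← comap_map_mk'_eq_self hNM, hM', comap_map_mk'_eq_self hNL])

theorem piProperty_map_quotient_general {G : Type*} [Group G] (H N : Subgroup G) [N.Normal]
    (h : SatisfiesPiProperty H) :
    SatisfiesPiProperty (H.map (QuotientGroup.mk' N)) := by
  intro K' L' hK' hL' hlt hmin q hq hdvd
  obtain ⟨K, hNK, rfl⟩ := exists_le_map_mk'_eq K'
  obtain ⟨L, hNL, rfl⟩ := exists_le_map_mk'_eq L'
  obtain ⟨hK, hL, hKL, hminG⟩ := IsChiefFactor.of_map_mk' hNK hNL ⟨hK', hL', hlt, hmin⟩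
  rw [map_mk'_inf_map_mk'_eq hNK] at hdvd ⊢
  rw [MulEquiv.index_normalizer_map] at hdvd
  rw [card_map_of_injective (MulEquiv.injective _)]
  exact h K L hK hL hKL hminG q hq hdvd

/-- If `H` satisfies the Π-property in `G` and `N ⊴ G`, then `HN/N` satisfies the
Π-property in `G/N`. -/
theorem piProperty_map_quotient {G : Type*} [Group G] [Finite G] (H N : Subgroup G) [N.Normal]
    (h : SatisfiesPiProperty H) :
    SatisfiesPiProperty (H.map (QuotientGroup.mk' N)) :=
  piProperty_map_quotient_general H N h
end

section
/- Let G be a finite group, N ⊴ G, H ≤ G with N ≤ H. If H satisfies the IC-Π-property in G, then H/N satisfies the IC-Π-property in G/N. -/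
/-!
Both properties pass to images under a surjective homomorphism `f : G →* Q`. A chief factor
`L/K` of `Q` pulls back to the chief factor `f⁻¹L/f⁻¹K` of `G`, and the isomorphism
`G/f⁻¹K ≅ Q/K` carries the section of `D` in it onto that of `f(D)`, so normalizer indices and
orders agree. For the IC-version, `f(H ∩ [H,G]) = f(H) ∩ [f(H), Q]` once `ker f ≤ H`, because
then `f(H ∩ B) = f(H) ∩ f(B)` for every `B`.
-/

open QuotientGroup

namespace Subgroup

variable {G Q : Type*} [Group G] [Group Q]

theorem map_inf_of_ker_le {f : G →* Q} {A : Subgroup G} (B : Subgroup G) (hA : f.ker ≤ A) :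
    (A ⊓ B).map f = A.map f ⊓ B.map f := by
  refine le_antisymm (map_inf_le A B f) ?_
  rintro _ ⟨⟨a, ha, rfl⟩, b, hb, hba⟩
  have hab : a⁻¹ * b ∈ A := hA (by simp [hba])
  exact ⟨b, ⟨by simpa using A.mul_mem ha hab, hb⟩, hba⟩

theorem eq_comap_or_eq_comap_of_chief {f : G →* Q} (hf : Function.Surjective f)
    {K L : Subgroup Q} (hKL : ∀ M : Subgroup Q, M.Normal → K ≤ M → M ≤ L → M = K ∨ M = L)
    {M : Subgroup G} (hM : M.Normal) (hKM : K.comap f ≤ M) (hML : M ≤ L.comap f) :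
    M = K.comap f ∨ M = L.comap f := by
  have hM_eq : (M.map f).comap f = M := comap_map_eq_self ((ker_le_comap f K).trans hKM)
  have hKM' : K ≤ M.map f := by
    simpa only [map_comap_eq_self_of_surjective hf] using map_mono (f := f) hKM
  rcases hKL (M.map f) (hM.map f hf) hKM' (map_le_iff_le_comap.mpr hML) with h | h
  · exact .inl (by rw [← hM_eq, h])
  · exact .inr (by rw [← hM_eq, h])

end Subgroup

namespace QuotientGroup

variable {G Q : Type*} [Group G] [Group Q] {f : G →* Q}

noncomputable def quotientComapEquiv (hf : Function.Surjective f) (K : Subgroup Q) [K.Normal] :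
    G ⧸ K.comap f ≃* Q ⧸ K :=
  liftEquiv _ (φ := (mk' K).comp f) ((mk'_surjective K).comp hf)
    (by rw [← MonoidHom.comap_ker, ker_mk'])

theorem map_quotientComapEquiv_map_mk' (hf : Function.Surjective f) (K : Subgroup Q) [K.Normal]
    (A : Subgroup G) :
    (A.map (mk' (K.comap f))).map (quotientComapEquiv hf K).toMonoidHom =
      (A.map f).map (mk' K) := by
  rw [Subgroup.map_map, Subgroup.map_map]
  rfl

end QuotientGroup

section

open Subgroup

variable {G Q : Type*} [Group G] [Group Q]

theorem SatisfiesPiProperty.map_of_surjective {D : Subgroup G} (hD : SatisfiesPiProperty D)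
    {f : G →* Q} (hf : Function.Surjective f) : SatisfiesPiProperty (D.map f) := by
  intro K L hK hL hKL hchief q hq hdvd
  let e := quotientComapEquiv hf K
  have hX : (D.map (mk' (K.comap f)) ⊓ (L.comap f).map (mk' (K.comap f))).map e.toMonoidHom =
      (D.map f).map (mk' K) ⊓ L.map (mk' K) := by
    rw [map_inf _ _ e.toMonoidHom e.injective, map_quotientComapEquiv_map_mk',
      map_quotientComapEquiv_map_mk', map_comap_eq_self_of_surjective hf]
  have hdvd_card := hD (K.comap f) (L.comap f) (hK.comap f) (hL.comap f)
    ((comap_lt_comap_of_surjective hf).mpr hKL)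
    (fun M hM => eq_comap_or_eq_comap_of_chief hf hchief hM) q hq
    (by rwa [← index_map_of_bijective (f := e.toMonoidHom) e.bijective,
      map_equiv_normalizer_eq, hX])
  rwa [← hX, card_map_of_injective (f := e.toMonoidHom) e.injective]

theorem SatisfiesICPiProperty.map_of_surjective {H : Subgroup G} (hH : SatisfiesICPiProperty H)
    {f : G →* Q} (hf : Function.Surjective f) (hker : f.ker ≤ H) :
    SatisfiesICPiProperty (H.map f) := by
  unfold SatisfiesICPiProperty
  rw [← map_top_of_surjective f hf, ← map_commutator, ← map_inf_of_ker_le _ hker]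
  exact SatisfiesPiProperty.map_of_surjective hH hf

end

theorem icPiProperty_map_quotient_of_le_general {G : Type*} [Group G] (H N : Subgroup G)
    [N.Normal] (hNH : N ≤ H) (h : SatisfiesICPiProperty H) :
    SatisfiesICPiProperty (H.map (QuotientGroup.mk' N)) :=
  h.map_of_surjective (mk'_surjective N) ((ker_mk' N).trans_le hNH)

/-- If `N ⊴ G`, `N ≤ H` and `H` satisfies the `IC`-Π-property in `G`, then `H/N` satisfies
the `IC`-Π-property in `G/N`. -/
theorem icPiProperty_map_quotient_of_le {G : Type*} [Group G] [Finite G] (H N : Subgroup G)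
    [N.Normal] (hNH : N ≤ H) (h : SatisfiesICPiProperty H) :
    SatisfiesICPiProperty (H.map (QuotientGroup.mk' N)) :=
  icPiProperty_map_quotient_of_le_general H N hNH h
end

section
/- Let G be a finite group, N ⊴ G, H ≤ G with gcd(|H|,|N|) = 1. Then HN ∩ [H,G] = (H ∩ [H,G])(N ∩ [H,G]), and consequently (HN/N) ∩ [HN/N, G/N] = (H ∩ [H,G])N/N. -/
open scoped Pointwise commutatorElement

/-!
Write `K = [H, G]`, a normal subgroup. The whole argument rests on `H ∩ KN ≤ K`: an element of
`H` lying in `KN` maps in `G/K` into the image of `N`, so its image has order dividing both `|H|`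
and `|N|`, hence is trivial. Given this, `hn ∈ K` with `h ∈ H`, `n ∈ N` forces
`h ∈ H ∩ KN ≤ K` and then `n ∈ K`. In `G/N` the image of `HN` is that of `H`, its commutator
with `G/N` is the image of `K`, and these meet in the image of `H ∩ KN = H ∩ K`.
-/

namespace Subgroup

variable {G : Type*} [Group G]

instance commutator_top_right_normal (H : Subgroup G) : (⁅H, ⊤⁆ : Subgroup G).Normal where
  conj_mem k hk g := by
    suffices hmap : (⁅H, ⊤⁆ : Subgroup G).map (MulAut.conj g).toMonoidHom ≤ ⁅H, ⊤⁆
      from hmap ⟨k, hk, rfl⟩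
    rw [map_commutator, commutator_le]
    rintro _ ⟨h, hh, rfl⟩ y -
    have hconj : ⁅g * h * g⁻¹, y⁆ = ⁅h, g⁆⁻¹ * ⁅h, y * g⁆ := by
      simp only [commutatorElement_def]
      group
    simpa [hconj] using mul_mem (inv_mem (commutator_mem_commutator hh (mem_top g)))
      (commutator_mem_commutator hh (mem_top (y * g)))

theorem mem_of_mem_sup_of_coprime_orderOf {K N : Subgroup G} [K.Normal] {x : G}
    (hx : (orderOf x).Coprime (Nat.card N)) (hxKN : x ∈ K ⊔ N) : x ∈ K := by
  rw [← SetLike.mem_coe, normal_mul] at hxKN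
  obtain ⟨k, hk, n, hn, rfl⟩ := hxKN
  have hmk : ((k * n : G) : G ⧸ K) = n := by
    rw [QuotientGroup.mk_mul, (QuotientGroup.eq_one_iff k).mpr hk, one_mul]
  have hdvd_N : orderOf ((k * n : G) : G ⧸ K) ∣ Nat.card N :=
    hmk ▸ (orderOf_map_dvd (QuotientGroup.mk' K) n).trans (N.orderOf_dvd_natCard hn)
  have hord : orderOf ((k * n : G) : G ⧸ K) = 1 :=
    Nat.eq_one_of_dvd_coprimes hx (orderOf_map_dvd (QuotientGroup.mk' K) _) hdvd_N
  rwa [orderOf_eq_one_iff, QuotientGroup.eq_one_iff] at hord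

theorem inf_sup_le_of_coprime {H K N : Subgroup G} [K.Normal]
    (hcop : (Nat.card H).Coprime (Nat.card N)) : H ⊓ (K ⊔ N) ≤ K := fun _ ⟨hxH, hxKN⟩ ↦
  mem_of_mem_sup_of_coprime_orderOf (hcop.coprime_dvd_left (H.orderOf_dvd_natCard hxH)) hxKN

theorem coe_sup_inf_eq_mul_of_inf_sup_le {H K N : Subgroup G} [N.Normal]
    (hHK : H ⊓ (K ⊔ N) ≤ K) :
    (((H ⊔ N) ⊓ K : Subgroup G) : Set G) =
      ((H ⊓ K : Subgroup G) : Set G) * (N ⊓ K : Subgroup G) :=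
  calc (((H ⊔ N) ⊓ K : Subgroup G) : Set G)
      = (K : Set G) ∩ (↑(K ⊔ N) ∩ ((H : Set G) * N)) := by
        rw [coe_inf, mul_normal, ← Set.inter_assoc,
          Set.inter_eq_left.mpr (SetLike.coe_subset_coe.mpr le_sup_left), Set.inter_comm]
    _ = (K : Set G) ∩ (((K ⊔ N) ⊓ H : Subgroup G) * (N : Set G)) := by
        rw [inf_mul_assoc _ _ _ le_sup_right]
    _ = (K : Set G) ∩ (((H ⊓ K : Subgroup G) : Set G) * N) := by
        rw [inf_comm, le_antisymm (le_inf inf_le_left hHK) (inf_le_inf_left H le_sup_left)]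
    _ = ((H ⊓ K : Subgroup G) : Set G) * (N ⊓ K : Subgroup G) := by
        rw [mul_inf_assoc _ _ _ inf_le_right, Set.inter_comm]

theorem map_inf_map_eq_map_inf_of_inf_sup_ker_le {G' : Type*} [Group G'] {H K : Subgroup G}
    (f : G →* G') (hHK : H ⊓ (K ⊔ f.ker) ≤ K) : H.map f ⊓ K.map f = (H ⊓ K).map f := by
  refine le_antisymm ?_ (map_inf_le H K f)
  rintro _ ⟨⟨h, hh, rfl⟩, hhK⟩
  have hh' : h ∈ K ⊔ f.ker := by rw [← comap_map_eq]; exact hhK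
  exact ⟨h, ⟨hh, hHK ⟨hh, hh'⟩⟩, rfl⟩

end Subgroup

theorem inter_commutator_of_coprime_general {G : Type*} [Group G] (H N : Subgroup G)
    [N.Normal] (hcop : Nat.Coprime (Nat.card H) (Nat.card N)) :
    ((((H ⊔ N) ⊓ ⁅H, (⊤ : Subgroup G)⁆ : Subgroup G) : Set G) =
      ((H ⊓ ⁅H, (⊤ : Subgroup G)⁆ : Subgroup G) : Set G) *
        ((N ⊓ ⁅H, (⊤ : Subgroup G)⁆ : Subgroup G) : Set G)) ∧
    ((H ⊔ N).map (QuotientGroup.mk' N) ⊓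
        ⁅(H ⊔ N).map (QuotientGroup.mk' N), (⊤ : Subgroup (G ⧸ N))⁆ =
      ((H ⊓ ⁅H, (⊤ : Subgroup G)⁆) ⊔ N).map (QuotientGroup.mk' N)) := by
  have hHK : H ⊓ (⁅H, ⊤⁆ ⊔ N) ≤ ⁅H, ⊤⁆ := Subgroup.inf_sup_le_of_coprime hcop
  refine ⟨Subgroup.coe_sup_inf_eq_mul_of_inf_sup_le hHK, ?_⟩
  have hcomm : ⁅H.map (QuotientGroup.mk' N), ⊤⁆ =
      (⁅H, ⊤⁆ : Subgroup G).map (QuotientGroup.mk' N) := by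
    rw [Subgroup.map_commutator, Subgroup.map_top_of_surjective _ (QuotientGroup.mk'_surjective N)]
  rw [Subgroup.map_sup, Subgroup.map_sup, QuotientGroup.map_mk'_self, sup_bot_eq, sup_bot_eq, hcomm]
  exact Subgroup.map_inf_map_eq_map_inf_of_inf_sup_ker_le _ (by rwa [QuotientGroup.ker_mk'])

/-- If `N ⊴ G` and `gcd(|H|,|N|) = 1`, then `HN ∩ [H,G] = (H ∩ [H,G])(N ∩ [H,G])` and
`(HN/N) ∩ [HN/N, G/N] = (H ∩ [H,G])N/N`. -/
theorem inter_commutator_of_coprime {G : Type*} [Group G] [Finite G] (H N : Subgroup G)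
    [N.Normal] (hcop : Nat.Coprime (Nat.card H) (Nat.card N)) :
    ((((H ⊔ N) ⊓ ⁅H, (⊤ : Subgroup G)⁆ : Subgroup G) : Set G) =
      ((H ⊓ ⁅H, (⊤ : Subgroup G)⁆ : Subgroup G) : Set G) *
        ((N ⊓ ⁅H, (⊤ : Subgroup G)⁆ : Subgroup G) : Set G)) ∧
    ((H ⊔ N).map (QuotientGroup.mk' N) ⊓
        ⁅(H ⊔ N).map (QuotientGroup.mk' N), (⊤ : Subgroup (G ⧸ N))⁆ =
      ((H ⊓ ⁅H, (⊤ : Subgroup G)⁆) ⊔ N).map (QuotientGroup.mk' N)) :=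
  inter_commutator_of_coprime_general H N hcop
end

section
/- Let G be a finite group, T a minimal normal subgroup of G, and L ≤ G with |T| = |L| = p for a prime p. If LT satisfies the IC-Π-property in G, then L satisfies the IC-Π-property in G. -/
open Subgroup

def NormalizerIndexIsPiNumber {Q : Type*} [Group Q] (X : Subgroup Q) : Prop :=
  ∀ q : ℕ, q.Prime → q ∣ (normalizer (X : Set Q)).index → q ∣ Nat.card X

theorem Subgroup.Normal.normalizerIndexIsPiNumber {Q : Type*} [Group Q] {X : Subgroup Q}
    (hX : X.Normal) : NormalizerIndexIsPiNumber X := by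
  intro q hq hdvd
  rw [normalizer_eq_top_iff.mpr hX, index_top, Nat.dvd_one] at hdvd
  exact absurd hdvd hq.ne_one

theorem Subgroup.eq_bot_or_eq_of_le_of_card_dvd_prime {Q : Type*} [Group Q] {p : ℕ}
    (hp : p.Prime) {A X : Subgroup Q} (hAX : A ≤ X) (hX : Nat.card X ∣ p) : A = ⊥ ∨ A = X := by
  have : Finite X := Nat.finite_of_card_ne_zero (ne_zero_of_dvd_ne_zero hp.ne_zero hX)
  have : Finite A := Finite.of_injective _ (inclusion_injective hAX)
  rcases (Nat.dvd_prime hp).mp ((card_dvd_of_le hAX).trans hX) with hA | hA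
  · exact .inl (eq_bot_of_card_eq A hA)
  · exact .inr (eq_of_le_of_card_ge hAX (hA ▸ Nat.le_of_dvd hp.pos hX))

theorem Subgroup.sup_inf_eq_left_of_inf_eq_bot {Q : Type*} [Group Q] {L T N : Subgroup Q}
    [T.Normal] (hLN : L ≤ N) (hTN : T ⊓ N = ⊥) : (L ⊔ T) ⊓ N = L := by
  refine le_antisymm ?_ (le_inf le_sup_left hLN)
  rintro _ ⟨hx, hxN⟩
  obtain ⟨l, hl, t, ht, rfl⟩ := mem_sup_of_normal_right.mp hx
  have htN : t ∈ N := by simpa using N.mul_mem (N.inv_mem (hLN hl)) hxN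
  have ht1 : t = 1 := by simpa [hTN] using mem_inf.mpr ⟨ht, htN⟩
  simpa [ht1] using hl

theorem Subgroup.eq_bot_or_eq_map_mk'_of_isChiefFactor {G : Type*} [Group G]
    {K N : Subgroup G} [K.Normal] (hKN : K ≤ N)
    (hchief : ∀ M : Subgroup G, M.Normal → K ≤ M → M ≤ N → M = K ∨ M = N)
    {M : Subgroup (G ⧸ K)} [M.Normal] (hM : M ≤ N.map (QuotientGroup.mk' K)) :
    M = ⊥ ∨ M = N.map (QuotientGroup.mk' K) := by
  have hsurj := QuotientGroup.mk'_surjective K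
  have hK : K ≤ M.comap (QuotientGroup.mk' K) := by
    simpa using ker_le_comap (QuotientGroup.mk' K) M
  have hN : M.comap (QuotientGroup.mk' K) ≤ N := by
    simpa [comap_map_eq, sup_eq_left.mpr hKN] using comap_mono (f := QuotientGroup.mk' K) hM
  rw [← map_comap_eq_self_of_surjective hsurj M]
  rcases hchief _ inferInstance hK hN with h | h <;> rw [h]
  · exact .inl (by simp)
  · exact .inr rfl

theorem Subgroup.inf_normal_or_eq_of_card_dvd_prime {Q : Type*} [Group Q] {p : ℕ}
    (hp : p.Prime) {L T N X Y : Subgroup Q} [T.Normal] [N.Normal]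
    (hL : Nat.card L ∣ p) (hT : Nat.card T ∣ p) (hTN : T ⊓ N = ⊥ ∨ T ⊓ N = N)
    (hXL : X ≤ L) (hXY : X ≤ Y) (hY : Y ≤ L ⊔ T) : (X ⊓ N).Normal ∨ X ⊓ N = Y ⊓ N := by
  rcases hTN with hTN | hNT
  · rcases eq_bot_or_eq_of_le_of_card_dvd_prime hp (inf_le_left.trans hXL) hL with hA | hA
    · exact .inl (hA ▸ normal_bot)
    · refine .inr (le_antisymm (inf_le_inf_right _ hXY) ?_)
      calc Y ⊓ N ≤ (L ⊔ T) ⊓ N := inf_le_inf_right _ hY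
        _ = L := sup_inf_eq_left_of_inf_eq_bot (hA ▸ inf_le_right) hTN
        _ = X ⊓ N := hA.symm
  · have hN : Nat.card N ∣ p := (card_dvd_of_le (inf_eq_right.mp hNT)).trans hT
    rcases eq_bot_or_eq_of_le_of_card_dvd_prime hp inf_le_right hN with hA | hA <;> rw [hA]
    · exact .inl normal_bot
    · exact .inl inferInstance

theorem icPiProperty_of_mul_minimal_normal_general {G : Type*} [Group G] [Finite G] (p : ℕ)
    (hp : p.Prime) (T L : Subgroup G) (hT : T.Normal)
    (hcardT : Nat.card T = p) (hcardL : Nat.card L = p)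
    (h : SatisfiesICPiProperty (L ⊔ T)) :
    SatisfiesICPiProperty L := by
  intro K N hK hN hKN hchief
  set f := QuotientGroup.mk' K
  have hsurj : Function.Surjective f := QuotientGroup.mk'_surjective K
  have hcard_map (H : Subgroup G) : Nat.card (H.map f) ∣ Nat.card H :=
    card_dvd_of_surjective (f.subgroupMap H) (f.subgroupMap_surjective H)
  have : (T.map f).Normal := hT.map f hsurj
  have : (N.map f).Normal := hN.map f hsurj
  show NormalizerIndexIsPiNumber ((L ⊓ ⁅L, ⊤⁆).map f ⊓ N.map f)
  rcases inf_normal_or_eq_of_card_dvd_prime hp (hcardL ▸ hcard_map L) (hcardT ▸ hcard_map T)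
      (eq_bot_or_eq_map_mk'_of_isChiefFactor hKN.le hchief inf_le_right) (map_mono inf_le_left)
      (map_mono (inf_le_inf le_sup_left (commutator_mono le_sup_left le_rfl)))
      (map_sup L T f ▸ map_mono inf_le_left) with hA | hA
  · exact hA.normalizerIndexIsPiNumber
  · rw [hA]
    exact h K N hK hN hKN hchief

/-- If `T` is a minimal normal subgroup of `G`, `|T| = |L| = p`, and `LT` satisfies the
`IC`-Π-property in `G`, then so does `L`. -/
theorem icPiProperty_of_mul_minimal_normal {G : Type*} [Group G] [Finite G] (p : ℕ)
    (hp : p.Prime) (T L : Subgroup G) (hT : T.Normal) (hTbot : T ≠ ⊥)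
    (hTmin : ∀ S : Subgroup G, S.Normal → S ≤ T → S = ⊥ ∨ S = T)
    (hcardT : Nat.card T = p) (hcardL : Nat.card L = p)
    (h : SatisfiesICPiProperty (L ⊔ T)) :
    SatisfiesICPiProperty L :=
  icPiProperty_of_mul_minimal_normal_general p hp T L hT hcardT hcardL h
end

section
/- Let U, V, W be subgroups of a group G. Then U ∩ (VW) = (U ∩ V)(U ∩ W) (as sets) if and only if UV ∩ UW = U(V ∩ W) (as sets). -/
/-!
Both identities have an automatic inclusion, and each reverse inclusion follows from the other
identity applied to a single element. If `x = u₁v = u₂w` lies in `UV ∩ UW`, then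
`u₁⁻¹u₂ = vw⁻¹ ∈ U ∩ VW`, so `vw⁻¹ = ab` with `a ∈ U ∩ V`, `b ∈ U ∩ W`, and
`x = (u₁a)(a⁻¹v)` with `a⁻¹v = bw ∈ V ∩ W`. If `x = vw` lies in `U ∩ VW`, then
`w⁻¹ = x⁻¹v ∈ UV ∩ UW`, so `w⁻¹ = ut` with `u ∈ U`, `t ∈ V ∩ W`, and `x = (vt⁻¹)u⁻¹`
with `vt⁻¹ = xu ∈ U ∩ V` and `u⁻¹ = tw ∈ U ∩ W`.
-/

open scoped Pointwise

namespace Subgroup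

variable {G : Type*} [Group G] (U V W : Subgroup G)

theorem coe_inf_mul_coe_inf_subset :
    ((U ⊓ V : Subgroup G) : Set G) * ((U ⊓ W : Subgroup G) : Set G) ⊆
      (U : Set G) ∩ ((V : Set G) * (W : Set G)) :=
  Set.subset_inter
    (U.toSubmonoid.coe_mul_self_eq ▸ Set.mul_subset_mul inf_le_left inf_le_left)
    (Set.mul_subset_mul inf_le_right inf_le_right)

theorem coe_mul_coe_inf_subset :
    (U : Set G) * ((V ⊓ W : Subgroup G) : Set G) ⊆
      ((U : Set G) * (V : Set G)) ∩ ((U : Set G) * (W : Set G)) :=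
  Set.subset_inter (Set.mul_subset_mul_left inf_le_left) (Set.mul_subset_mul_left inf_le_right)

variable {U V W}

theorem mul_inter_mul_subset_of_inter_mul_subset
    (h : (U : Set G) ∩ ((V : Set G) * (W : Set G)) ⊆
      ((U ⊓ V : Subgroup G) : Set G) * ((U ⊓ W : Subgroup G) : Set G)) :
    ((U : Set G) * (V : Set G)) ∩ ((U : Set G) * (W : Set G)) ⊆
      (U : Set G) * ((V ⊓ W : Subgroup G) : Set G) := by
  rintro x ⟨⟨u₁, hu₁, v, hv, rfl⟩, ⟨u₂, hu₂, w, hw, hx⟩⟩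
  beta_reduce at hx
  have hvw : v * w⁻¹ = u₁⁻¹ * u₂ :=
    calc v * w⁻¹ = u₁⁻¹ * (u₁ * v) * w⁻¹ := by group
      _ = u₁⁻¹ * u₂ := by rw [← hx]; group
  obtain ⟨a, ⟨haU, haV⟩, b, ⟨-, hbW⟩, hab⟩ :=
    h ⟨U.mul_mem (U.inv_mem hu₁) hu₂, v, hv, w⁻¹, W.inv_mem hw, hvw⟩
  beta_reduce at hab
  have hbw : a⁻¹ * v = b * w :=
    calc a⁻¹ * v = a⁻¹ * (v * w⁻¹) * w := by group
      _ = b * w := by rw [hvw, ← hab]; group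
  exact ⟨u₁ * a, U.mul_mem hu₁ haU, a⁻¹ * v,
    ⟨V.mul_mem (V.inv_mem haV) hv, hbw ▸ W.mul_mem hbW hw⟩, by group⟩

theorem inter_mul_subset_of_mul_inter_mul_subset
    (h : ((U : Set G) * (V : Set G)) ∩ ((U : Set G) * (W : Set G)) ⊆
      (U : Set G) * ((V ⊓ W : Subgroup G) : Set G)) :
    (U : Set G) ∩ ((V : Set G) * (W : Set G)) ⊆
      ((U ⊓ V : Subgroup G) : Set G) * ((U ⊓ W : Subgroup G) : Set G) := by
  rintro x ⟨hxU, v, hv, w, hw, rfl⟩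
  obtain ⟨u, hu, t, ⟨htV, htW⟩, hut⟩ :=
    h ⟨⟨(v * w)⁻¹, U.inv_mem hxU, v, hv, by group⟩, ⟨1, U.one_mem, w⁻¹, W.inv_mem hw, one_mul _⟩⟩
  beta_reduce at hxU hut
  obtain rfl : w = t⁻¹ * u⁻¹ := by rw [← mul_inv_rev, hut, inv_inv]
  have hvtU : v * t⁻¹ = v * (t⁻¹ * u⁻¹) * u := by group
  have huW : u⁻¹ = t * (t⁻¹ * u⁻¹) := by group
  exact ⟨v * t⁻¹, ⟨hvtU ▸ U.mul_mem hxU hu, V.mul_mem hv (V.inv_mem htV)⟩, u⁻¹,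
    ⟨U.inv_mem hu, huW ▸ W.mul_mem htW hw⟩, by group⟩

end Subgroup

open Subgroup in
/-- For subgroups `U, V, W` of `G`: `U ∩ VW = (U ∩ V)(U ∩ W)` iff `UV ∩ UW = U(V ∩ W)`,
as sets. -/
theorem dedekind_type_identity_iff {G : Type*} [Group G] (U V W : Subgroup G) :
    ((U : Set G) ∩ ((V : Set G) * (W : Set G)) =
        ((U ⊓ V : Subgroup G) : Set G) * ((U ⊓ W : Subgroup G) : Set G)) ↔
      (((U : Set G) * (V : Set G)) ∩ ((U : Set G) * (W : Set G)) =
        (U : Set G) * ((V ⊓ W : Subgroup G) : Set G)) :=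
  ⟨fun h => (mul_inter_mul_subset_of_inter_mul_subset h.subset).antisymm
      (coe_mul_coe_inf_subset U V W),
    fun h => (inter_mul_subset_of_mul_inter_mul_subset h.subset).antisymm
      (coe_inf_mul_coe_inf_subset U V W)⟩
end

section
/- Let X be a non-abelian finite simple group whose Sylow p-subgroups have order p, let x ∈ X have order p, and let Y = ⟨y⟩ be cyclic of order p. Set G = X × Y and H = ⟨xy⟩. Then H ∩ [H,G] = 1, so H satisfies the IC-Π-property in G, but H does not satisfy the Π-property in G (witnessed by the chief factor G/Y, for which |G/Y : N_{G/Y}(HY/Y)| is not a p-number). -/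
/-!
In `G = X × Y` the second coordinate of every commutator is trivial since `Y` is abelian, and
`(x, y) ^ k` has trivial second coordinate only when `p ∣ k`, when also `x ^ k = 1`. Hence
`H ∩ [H, G] = 1`, which satisfies the Π-property trivially.

The Π-property of `H` fails at the chief factor `G / Y ≅ X`, where `HY / Y` becomes `⟨x⟩`, a
Sylow `p`-subgroup of `X`. The index of its normalizer is `|Syl_p(X)|`, which is prime to `p`, and
is not `1` because `⟨x⟩` is not normal in the non-abelian simple group `X`; so it has a prime
divisor `q ≠ p`, whereas `|⟨x⟩| = p`.
-/

open Subgroup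

lemma satisfiesPiProperty_bot {G : Type*} [Group G] : SatisfiesPiProperty (⊥ : Subgroup G) := by
  intro K L hK _ _ _ q hq hdvd
  rw [Subgroup.map_bot, bot_inf_eq, normalizer_eq_top_iff.mpr inferInstance, index_top] at hdvd
  exact absurd (Nat.dvd_one.mp hdvd) hq.ne_one

section Product

variable {X Y : Type*} [Group X] [Group Y]

lemma commutator_le_ker_snd [IsMulCommutative Y] (H K : Subgroup (X × Y)) :
    ⁅H, K⁆ ≤ (MonoidHom.snd X Y).ker := by
  rw [commutator_le]
  intro g _ h _
  rw [MonoidHom.mem_ker, map_commutatorElement, commutatorElement_eq_one_iff_mul_comm]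
  exact mul_comm' _ _

lemma zpowers_inf_ker_snd_eq_bot {x : X} {y : Y} (hxy : orderOf x ∣ orderOf y) :
    zpowers (x, y) ⊓ (MonoidHom.snd X Y).ker = ⊥ := by
  rw [eq_bot_iff]
  rintro _ ⟨⟨k, rfl⟩, hk : (x, y) ^ k ∈ (MonoidHom.snd X Y).ker⟩
  have hyk : y ^ k = 1 := by rwa [MonoidHom.mem_ker, map_zpow] at hk
  have hxk : x ^ k = 1 :=
    orderOf_dvd_iff_zpow_eq_one.mp ((Int.natCast_dvd_natCast.mpr hxy).trans
      (orderOf_dvd_iff_zpow_eq_one.mpr hyk))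
  simp [hxk, hyk]

lemma zpowers_inf_commutator_eq_bot [IsMulCommutative Y] {x : X} {y : Y}
    (hxy : orderOf x ∣ orderOf y) : zpowers (x, y) ⊓ ⁅zpowers (x, y), ⊤⁆ = ⊥ :=
  eq_bot_mono (inf_le_inf_left _ (commutator_le_ker_snd _ _)) (zpowers_inf_ker_snd_eq_bot hxy)

end Product

section SimpleGroup

variable {X : Type*} [Group X]

lemma index_normalizer_zpowers_ne_one [IsSimpleGroup X] (hX : ¬ IsMulCommutative X) {x : X}
    (hx : x ≠ 1) : (normalizer (zpowers x : Set X)).index ≠ 1 := by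
  intro h
  have hnormal : (zpowers x).Normal := normalizer_eq_top_iff.mp (index_eq_one.mp h)
  rcases hnormal.eq_bot_or_eq_top with hbot | htop
  · exact hx (zpowers_eq_bot.mp hbot)
  · have : IsCyclic X := isCyclic_iff_exists_zpowers_eq_top.mpr ⟨x, htop⟩
    exact hX IsCyclic.isMulCommutative

lemma not_dvd_index_normalizer_zpowers [Finite X] {p : ℕ} [Fact p.Prime]
    (hSyl : ∀ P : Sylow p X, Nat.card P = p) {x : X} (hx : orderOf x = p) :
    ¬ p ∣ (normalizer (zpowers x : Set X)).index := by
  have hcard : Nat.card (zpowers x) = p := by rw [Nat.card_zpowers, hx]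
  obtain ⟨P, hxP⟩ := (IsPGroup.of_card (n := 1) (by rw [hcard, pow_one])).exists_le_sylow
  have hPx : (P : Subgroup X) = zpowers x :=
    (eq_of_le_of_card_ge hxP (by rw [hcard, hSyl P])).symm
  intro hdvd
  refine P.not_dvd_index (dvd_trans hdvd (index_dvd_of_le ?_))
  rw [hPx]
  exact le_normalizer

lemma exists_prime_ne_dvd_index_normalizer_zpowers [Finite X] [IsSimpleGroup X]
    (hX : ¬ IsMulCommutative X) {p : ℕ} (hp : p.Prime) (hSyl : ∀ P : Sylow p X, Nat.card P = p)
    {x : X} (hx : orderOf x = p) :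
    ∃ q, q.Prime ∧ q ≠ p ∧ q ∣ (normalizer (zpowers x : Set X)).index := by
  have : Fact p.Prime := ⟨hp⟩
  have hx1 : x ≠ 1 := by
    rintro rfl
    exact hp.ne_one (hx.symm.trans orderOf_one)
  set n := (normalizer (zpowers x : Set X)).index
  refine ⟨n.minFac, Nat.minFac_prime (index_normalizer_zpowers_ne_one hX hx1), ?_, n.minFac_dvd⟩
  rintro hq
  exact not_dvd_index_normalizer_zpowers hSyl hx (hq ▸ n.minFac_dvd)

end SimpleGroup

section ChiefFactor

variable {G Q : Type*} [Group G] [Group Q] [IsSimpleGroup Q] {f : G →* Q}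

lemma MonoidHom.ker_lt_top_of_surjective (hf : Function.Surjective f) : f.ker < ⊤ := by
  refine lt_top_iff_ne_top.mpr fun h => ?_
  obtain ⟨q, hq⟩ := exists_ne (1 : Q)
  obtain ⟨g, rfl⟩ := hf q
  exact hq (MonoidHom.ker_eq_top_iff.mp h ▸ rfl)

lemma MonoidHom.eq_ker_or_eq_top_of_ker_le (hf : Function.Surjective f) {M : Subgroup G}
    (hM : M.Normal) (hle : f.ker ≤ M) : M = f.ker ∨ M = ⊤ := by
  rcases (hM.map f hf).eq_bot_or_eq_top with hbot | htop
  · exact Or.inl (le_antisymm ((map_eq_bot_iff M).mp hbot) hle)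
  · right
    rw [← sup_eq_left.mpr hle, ← comap_map_eq, htop, comap_top]

lemma SatisfiesPiProperty.dvd_card_map_of_surjective {H : Subgroup G}
    (hH : SatisfiesPiProperty H) (hf : Function.Surjective f) {q : ℕ} (hq : q.Prime)
    (hdvd : q ∣ (normalizer (H.map f : Set Q)).index) : q ∣ Nat.card (H.map f) := by
  have hchief := hH f.ker ⊤ f.normal_ker inferInstance (f.ker_lt_top_of_surjective hf)
    (fun M hM hle _ => f.eq_ker_or_eq_top_of_ker_le hf hM hle) q hq
  rw [map_top_of_surjective _ (QuotientGroup.mk'_surjective _), inf_top_eq] at hchief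
  set e := QuotientGroup.quotientKerEquivOfSurjective f hf
  have hmap : (H.map (QuotientGroup.mk' f.ker)).map e.toMonoidHom = H.map f := by
    rw [map_map]
    rfl
  rw [← hmap, ← map_normalizer_eq_of_bijective _ (f := e.toMonoidHom) e.bijective,
    index_map_of_bijective (f := e.toMonoidHom) e.bijective] at hdvd
  rw [← hmap, card_map_of_injective (f := e.toMonoidHom) e.injective]
  exact hchief hdvd

end ChiefFactor

theorem example_ic_pi_not_pi_general {X Y : Type*} [Group X] [Group Y] [Finite X]
    (p : ℕ) (hp : p.Prime) (hsimple : IsSimpleGroup X) (hna : ∃ a b : X, a * b ≠ b * a)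
    (hSyl : ∀ P : Sylow p X, Nat.card P = p)
    (x : X) (hx : orderOf x = p) (y : Y) (hy : orderOf y = p)
    (hYgen : ∀ z : Y, z ∈ Subgroup.zpowers y) :
    Subgroup.zpowers ((x, y) : X × Y) ⊓
        ⁅Subgroup.zpowers ((x, y) : X × Y), (⊤ : Subgroup (X × Y))⁆ = ⊥ ∧
      SatisfiesICPiProperty (Subgroup.zpowers ((x, y) : X × Y)) ∧
      ¬ SatisfiesPiProperty (Subgroup.zpowers ((x, y) : X × Y)) := by
  have : IsCyclic Y := ⟨y, hYgen⟩
  have hbot := zpowers_inf_commutator_eq_bot (x := x) (y := y) (hx.trans hy.symm).dvd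
  have hIC : SatisfiesICPiProperty (zpowers ((x, y) : X × Y)) := by
    rw [SatisfiesICPiProperty, hbot]
    exact satisfiesPiProperty_bot
  refine ⟨hbot, hIC, fun hPi => ?_⟩
  have hX : ¬ IsMulCommutative X := fun _ => hna.elim fun a ⟨b, hab⟩ => hab (mul_comm' a b)
  obtain ⟨q, hq, hqp, hdvd⟩ := exists_prime_ne_dvd_index_normalizer_zpowers hX hp hSyl hx
  have hmap : (zpowers ((x, y) : X × Y)).map (MonoidHom.fst X Y) = zpowers x :=
    MonoidHom.map_zpowers _ _
  have hqdvd := hPi.dvd_card_map_of_surjective Prod.fst_surjective hq (hmap ▸ hdvd)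
  rw [hmap, Nat.card_zpowers, hx] at hqdvd
  exact hqp ((Nat.prime_dvd_prime_iff_eq hq hp).mp hqdvd)

/-- Let `X` be a non-abelian finite simple group with Sylow `p`-subgroups of order `p`,
`x ∈ X` of order `p`, `Y = ⟨y⟩` cyclic of order `p`, `G = X × Y` and `H = ⟨xy⟩`.
Then `H ∩ [H,G] = 1` (so `H` satisfies the `IC`-Π-property in `G`), but `H` does not
satisfy the Π-property in `G`. -/
theorem example_ic_pi_not_pi {X Y : Type*} [Group X] [Group Y] [Finite X] [Finite Y]
    (p : ℕ) (hp : p.Prime) (hsimple : IsSimpleGroup X) (hna : ∃ a b : X, a * b ≠ b * a)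
    (hSyl : ∀ P : Sylow p X, Nat.card P = p)
    (x : X) (hx : orderOf x = p) (y : Y) (hy : orderOf y = p)
    (hYgen : ∀ z : Y, z ∈ Subgroup.zpowers y) :
    Subgroup.zpowers ((x, y) : X × Y) ⊓
        ⁅Subgroup.zpowers ((x, y) : X × Y), (⊤ : Subgroup (X × Y))⁆ = ⊥ ∧
      SatisfiesICPiProperty (Subgroup.zpowers ((x, y) : X × Y)) ∧
      ¬ SatisfiesPiProperty (Subgroup.zpowers ((x, y) : X × Y)) :=
  example_ic_pi_not_pi_general p hp hsimple hna hSyl x hx y hy hYgen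
end

section
/- Let G be a finite group with p dividing |G|. Then every p-subgroup L of the p-supersoluble hypercenter Z_{p𝔘}(G) satisfies the Π-property in G; consequently every p-subgroup of Z_{p𝔘}(G) satisfies the IC-Π-property in G. -/
/-- The supersoluble hypercenter `Z_𝔘(G)`: the product of all normal subgroups `H` of `G`
such that every chief factor of `G` below `H` is cyclic. -/
def supersolubleHypercenter (G : Type*) [Group G] : Subgroup G :=
  ⨆ H ∈ {H : Subgroup G | H.Normal ∧
      ∀ (K L : Subgroup G) (hK : K.Normal), L.Normal → K < L → L ≤ H →
        (∀ M : Subgroup G, M.Normal → K ≤ M → M ≤ L → M = K ∨ M = L) →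
        haveI := hK
        IsCyclic ↥(L.map (QuotientGroup.mk' K))}, H

/-- The `p`-supersoluble hypercenter `Z_{p𝔘}(G)`: the product of all normal subgroups `H` of `G`
such that every `p`-chief factor of `G` below `H` is cyclic of order `p`. -/
def pSupersolubleHypercenter (p : ℕ) (G : Type*) [Group G] : Subgroup G :=
  ⨆ H ∈ {H : Subgroup G | H.Normal ∧
      ∀ K L : Subgroup G, K.Normal → L.Normal → K < L → L ≤ H →
        (∀ M : Subgroup G, M.Normal → K ≤ M → M ≤ L → M = K ∨ M = L) →
        p ∣ K.relIndex L → K.relIndex L = p}, H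

/-!
For a chief factor `A/K` and a normal subgroup `N`, either `N` covers it (`A ≤ NK`) or avoids it
(`A ∩ NK = K`); in both cases `A/K` is `G`-isomorphic to a chief factor below `N` or above `N`, by
the Dedekind law. Hence the property "every `p`-chief factor covered by `N` has order `p`" passes to
products and so holds for `Z_{p𝔘}(G)`. For a `p`-subgroup `H ≤ Z_{p𝔘}(G)` the intersection
`HK/K ∩ A/K` is then trivial (if `A/K` is avoided or is a `p'`-group) or all of `A/K` (if `A/K` has
order `p`), so it is normal in `G/K` and its normalizer has index `1`.
-/

namespace Subgroup

variable {G : Type*} [Group G]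

theorem inf_sup_assoc_of_le_of_normal {A K : Subgroup G} (H : Subgroup G) [K.Normal]
    (hKA : K ≤ A) : A ⊓ H ⊔ K = A ⊓ (H ⊔ K) :=
  SetLike.coe_injective <| by
    rw [mul_normal, coe_inf A (H ⊔ K), mul_normal, inf_mul_assoc A H K hKA]

theorem relIndex_inf_eq_relIndex_sup (X Y : Subgroup G) [X.Normal] :
    (X ⊓ Y).relIndex Y = X.relIndex (X ⊔ Y) := by
  rw [inf_relIndex_right, sup_comm, relIndex_sup_right]

structure IsChiefFactor_s18 (K A : Subgroup G) : Prop where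
  normal_left : K.Normal
  normal_right : A.Normal
  lt : K < A
  eq_or_eq : ∀ M : Subgroup G, M.Normal → K ≤ M → M ≤ A → M = K ∨ M = A

/-- `M ↦ M ⊔ X` and `M ↦ M ⊓ Y` are mutually inverse between the normal subgroups in `[X ⊓ Y, Y]`
and in `[X, X ⊔ Y]`. -/
theorem isChiefFactor_inf_iff_sup {X Y : Subgroup G} [X.Normal] [Y.Normal] :
    IsChiefFactor_s18 (X ⊓ Y) Y ↔ IsChiefFactor_s18 X (X ⊔ Y) := by
  have hlt : X ⊓ Y < Y ↔ X < X ⊔ Y := by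
    rw [inf_lt_right, left_lt_sup]
  constructor
  · rintro ⟨-, -, hXY, hchief⟩
    refine ⟨inferInstance, inferInstance, hlt.mp hXY, fun M _ hXM hMXY => ?_⟩
    have hM_eq : M = M ⊓ Y ⊔ X := by
      rw [inf_sup_assoc_of_le_of_normal Y hXM, sup_comm, inf_eq_left.mpr hMXY]
    rcases hchief (M ⊓ Y) inferInstance (inf_le_inf_right Y hXM) inf_le_right with h | h
    · left
      rw [hM_eq, h, sup_eq_right.mpr inf_le_left]
    · right
      rw [hM_eq, h, sup_comm]
  · rintro ⟨-, -, hXY, hchief⟩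
    refine ⟨inferInstance, inferInstance, hlt.mpr hXY, fun M _ hXYM hMY => ?_⟩
    rcases hchief (X ⊔ M) inferInstance le_sup_left (sup_le_sup_left hMY X) with h | h
    · left
      exact le_antisymm (le_inf (sup_eq_left.mp h) hMY) hXYM
    · right
      calc M = Y ⊓ X ⊔ M := (sup_eq_right.mpr (inf_comm Y X ▸ hXYM)).symm
        _ = Y ⊓ (X ⊔ M) := inf_sup_assoc_of_le_of_normal X hMY
        _ = Y := by rw [h, inf_eq_left.mpr le_sup_right]

namespace IsChiefFactor_s18

variable {K A : Subgroup G}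

theorem le_sup_or_inf_sup_eq (h : IsChiefFactor_s18 K A) (N : Subgroup G) [N.Normal] :
    A ≤ N ⊔ K ∨ A ⊓ (N ⊔ K) = K := by
  have := h.normal_left
  have := h.normal_right
  rcases h.eq_or_eq (A ⊓ (N ⊔ K)) inferInstance
    (le_inf h.lt.le le_sup_right) inf_le_left with h' | h'
  · exact Or.inr h'
  · exact Or.inl (inf_eq_left.mp h')

theorem inf_of_le_sup (h : IsChiefFactor_s18 K A) {N : Subgroup G} [N.Normal] (hAN : A ≤ N ⊔ K) :
    IsChiefFactor_s18 (N ⊓ K) (N ⊓ A) ∧ (N ⊓ K).relIndex (N ⊓ A) = K.relIndex A := by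
  have := h.normal_left
  have := h.normal_right
  have hA : K ⊔ N ⊓ A = A := by
    rw [sup_comm, inf_comm, inf_sup_assoc_of_le_of_normal N h.lt.le, inf_eq_left.mpr hAN]
  have hK : K ⊓ (N ⊓ A) = N ⊓ K := by
    rw [inf_left_comm, inf_eq_left.mpr h.lt.le]
  have hchief := isChiefFactor_inf_iff_sup.mpr (hA.symm ▸ h)
  rw [hK] at hchief
  refine ⟨hchief, ?_⟩
  rw [← hK, relIndex_inf_eq_relIndex_sup, hA]

theorem sup_of_inf_eq (h : IsChiefFactor_s18 K A) {M : Subgroup G} [M.Normal] (hAM : A ⊓ M = K) :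
    IsChiefFactor_s18 M (M ⊔ A) ∧ M.relIndex (M ⊔ A) = K.relIndex A := by
  have := h.normal_right
  rw [← relIndex_inf_eq_relIndex_sup, ← isChiefFactor_inf_iff_sup, inf_comm, hAM]
  exact ⟨h, rfl⟩

end IsChiefFactor_s18

end Subgroup

open Subgroup

section CoveredPChiefFactors

variable {G : Type*} [Group G] {p : ℕ}

def CoveredPChiefFactorsHaveOrder (p : ℕ) (N : Subgroup G) : Prop :=
  N.Normal ∧ ∀ K A : Subgroup G, IsChiefFactor_s18 K A → A ≤ N ⊔ K → p ∣ K.relIndex A →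
    K.relIndex A = p

theorem coveredPChiefFactorsHaveOrder_bot : CoveredPChiefFactorsHaveOrder p (⊥ : Subgroup G) :=
  ⟨inferInstance, fun _ _ h hA _ => absurd (hA.trans_eq (bot_sup_eq _)) h.lt.not_ge⟩

theorem CoveredPChiefFactorsHaveOrder.sup {N₁ N₂ : Subgroup G}
    (h₁ : CoveredPChiefFactorsHaveOrder p N₁) (h₂ : CoveredPChiefFactorsHaveOrder p N₂) :
    CoveredPChiefFactorsHaveOrder p (N₁ ⊔ N₂) := by
  obtain ⟨hN₁, hcov₁⟩ := h₁
  obtain ⟨hN₂, hcov₂⟩ := h₂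
  refine ⟨inferInstance, fun K A hKA hA hdvd => ?_⟩
  have := hKA.normal_left
  rcases hKA.le_sup_or_inf_sup_eq N₁ with hcovered | havoided
  · exact hcov₁ K A hKA hcovered hdvd
  · obtain ⟨hchief, hrel⟩ := hKA.sup_of_inf_eq havoided
    rw [← hrel] at hdvd ⊢
    refine hcov₂ _ _ hchief (sup_le le_sup_right ?_) hdvd
    calc A ≤ N₁ ⊔ N₂ ⊔ K := hA
      _ ≤ N₂ ⊔ (N₁ ⊔ K) := by
        rw [sup_comm N₁ N₂, sup_assoc]

theorem coveredPChiefFactorsHaveOrder_of_forall {H : Subgroup G} (hH : H.Normal)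
    (hchief : ∀ K L : Subgroup G, K.Normal → L.Normal → K < L → L ≤ H →
      (∀ M : Subgroup G, M.Normal → K ≤ M → M ≤ L → M = K ∨ M = L) →
      p ∣ K.relIndex L → K.relIndex L = p) :
    CoveredPChiefFactorsHaveOrder p H := by
  refine ⟨hH, fun K A hKA hA hdvd => ?_⟩
  obtain ⟨⟨hK', hA', hlt, heq⟩, hrel⟩ := hKA.inf_of_le_sup hA
  rw [← hrel] at hdvd ⊢
  exact hchief _ _ hK' hA' hlt inf_le_left heq hdvd

theorem coveredPChiefFactorsHaveOrder_pSupersolubleHypercenter [Finite G] :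
    CoveredPChiefFactorsHaveOrder p (pSupersolubleHypercenter p G) :=
  SupClosed.biSup_mem (s := {N | CoveredPChiefFactorsHaveOrder p N})
    (fun _ h₁ _ h₂ => h₁.sup h₂) (Set.toFinite _) coveredPChiefFactorsHaveOrder_bot
    fun _ hH => coveredPChiefFactorsHaveOrder_of_forall hH.1 hH.2

end CoveredPChiefFactors

theorem QuotientGroup.map_mk'_inf_map_mk' {G : Type*} [Group G] {K : Subgroup G} [K.Normal]
    (H A : Subgroup G) :
    H.map (mk' K) ⊓ A.map (mk' K) = ((H ⊔ K) ⊓ (A ⊔ K)).map (mk' K) := by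
  rw [← map_comap_eq_self_of_surjective (mk'_surjective K) (H.map (mk' K) ⊓ A.map (mk' K)),
    comap_inf, comap_map_eq, comap_map_eq, ker_mk']

open QuotientGroup

section PiProperty

variable {G : Type*} [Group G] {p : ℕ} {H N K A : Subgroup G}

theorem IsPGroup.map_mk'_inf_map_mk'_eq_bot_or_eq (hp : p.Prime) (hH : IsPGroup p H)
    (hHN : H ≤ N) (hN : CoveredPChiefFactorsHaveOrder p N) (hKA : IsChiefFactor_s18 K A) [K.Normal] :
    H.map (mk' K) ⊓ A.map (mk' K) = ⊥ ∨ H.map (mk' K) ⊓ A.map (mk' K) = A.map (mk' K) := by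
  have hIA : H.map (mk' K) ⊓ A.map (mk' K) ≤ A.map (mk' K) := inf_le_right
  have hcardA : Nat.card (A.map (mk' K)) = K.relIndex A := by
    rw [← relIndex_ker, ker_mk']
  have := hN.1
  rcases hKA.le_sup_or_inf_sup_eq N with hcovered | havoided
  · by_cases hpA : p ∣ K.relIndex A
    · have hcard : Nat.card (A.map (mk' K)) = p := hcardA.trans (hN.2 K A hKA hcovered hpA)
      have : Finite (A.map (mk' K)) := Nat.finite_of_card_ne_zero (hcard ▸ hp.ne_zero)
      rcases hp.eq_one_or_self_of_dvd _ (hcard ▸ card_dvd_of_le hIA) with hone | hcardI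
      · exact Or.inl (card_eq_one.mp hone)
      · exact Or.inr (eq_of_le_of_card_ge hIA (hcard.trans hcardI.symm).le)
    · have : Fact p.Prime := ⟨hp⟩
      rcases ((hH.map (mk' K)).to_inf_left (K := A.map (mk' K))).card_eq_or_dvd with hone | hpI
      · exact Or.inl (card_eq_one.mp hone)
      · exact absurd (hpI.trans (hcardA ▸ card_dvd_of_le hIA)) hpA
  · left
    rw [map_mk'_inf_map_mk', Subgroup.map_eq_bot_iff, ker_mk', sup_eq_left.mpr hKA.lt.le]
    calc (H ⊔ K) ⊓ A ≤ (N ⊔ K) ⊓ A := inf_le_inf_right A (sup_le_sup_right hHN K)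
      _ = K := by rw [inf_comm, havoided]

theorem IsPGroup.satisfiesPiProperty (hp : p.Prime) (hH : IsPGroup p H) (hHN : H ≤ N)
    (hN : CoveredPChiefFactorsHaveOrder p N) : SatisfiesPiProperty H := by
  intro K A hK hA hlt hchief q hq hqdvd
  have hnormal : (H.map (mk' K) ⊓ A.map (mk' K)).Normal := by
    rcases hH.map_mk'_inf_map_mk'_eq_bot_or_eq hp hHN hN ⟨hK, hA, hlt, hchief⟩ with h | h <;>
      rw [h]
    · infer_instance
    · exact hA.map _ (mk'_surjective K)
  rw [normalizer_eq_top_iff.mpr hnormal, index_top] at hqdvd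
  exact (hq.not_dvd_one hqdvd).elim

end PiProperty

theorem piProperty_of_le_pSupersolubleHypercenter_general {G : Type*} [Group G] [Finite G] (p : ℕ)
    (hp : p.Prime) (L : Subgroup G) (hL : IsPGroup p L)
    (hLZ : L ≤ pSupersolubleHypercenter p G) :
    SatisfiesPiProperty L ∧ SatisfiesICPiProperty L := by
  have hZ : CoveredPChiefFactorsHaveOrder p (pSupersolubleHypercenter p G) :=
    coveredPChiefFactorsHaveOrder_pSupersolubleHypercenter
  exact ⟨hL.satisfiesPiProperty hp hLZ hZ,
    hL.to_inf_left.satisfiesPiProperty hp (inf_le_left.trans hLZ) hZ⟩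

/-- If `p` divides `|G|`, then every `p`-subgroup of `Z_{p𝔘}(G)` satisfies the Π-property,
and hence the `IC`-Π-property, in `G`. -/
theorem piProperty_of_le_pSupersolubleHypercenter {G : Type*} [Group G] [Finite G] (p : ℕ)
    (hp : p.Prime) (hpG : p ∣ Nat.card G) (L : Subgroup G) (hL : IsPGroup p L)
    (hLZ : L ≤ pSupersolubleHypercenter p G) :
    SatisfiesPiProperty L ∧ SatisfiesICPiProperty L :=
  piProperty_of_le_pSupersolubleHypercenter_general p hp L hL hLZ
end
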